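/- arXiv:1505.02402 — 2 statements merged into one kernel-verified Lean document; each statement's English description precedes it below -/
import Mathlib

section
/- Core estimate of Lemma 2: let V be a symmetric positive definite n×n matrix, μ > 0, Q : [-h,0] → ℝ^{n×r} piecewise continuous, and G = ∫_{-h}^0 Q(θ)Q(θ)ᵀ dθ. Then for every x ∈ ℝⁿ and every piecewise continuous φ : [-h,0) → ℝʳ, (x + ∫_{-h}^0 Q(θ)φ(θ) dθ)ᵀ V (x + ∫_{-h}^0 Q(θ)φ(θ) dθ) + μ ∫_{-h}^0 ‖φ(θ)‖² dθ ≥ xᵀ (V⁻¹ + μ⁻¹ G)⁻¹ x. -/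
/-! With `A = V⁻¹ + μ⁻¹ G` and `z = A⁻¹ x`, complete the square twice. For `w = x + ∫ Q φ`,
`wᵀ V w ≥ 2 zᵀ w - zᵀ V⁻¹ z`; pointwise, `μ ‖φ‖² ≥ -2 zᵀ Q φ - μ⁻¹ ‖Qᵀ z‖²`, which integrates to
`μ ∫ ‖φ‖² ≥ -2 zᵀ ∫ Q φ - μ⁻¹ zᵀ G z`. The sum of the right-hand sides is
`2 zᵀ x - zᵀ A z = xᵀ A⁻¹ x`. `A` is invertible because `G = ∫ Q Qᵀ` is positive semidefinite. -/

open scoped Matrix.Norms.L2Operator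
open Matrix MeasureTheory

/-- Minimal eigenvalue of a (symmetric) real matrix, as the infimum of its real spectrum. -/
noncomputable def lamMin {n : ℕ} (M : Matrix (Fin n) (Fin n) ℝ) : ℝ := sInf (spectrum ℝ M)

/-- Maximal eigenvalue of a (symmetric) real matrix, as the supremum of its real spectrum. -/
noncomputable def lamMax {n : ℕ} (M : Matrix (Fin n) (Fin n) ℝ) : ℝ := sSup (spectrum ℝ M)

/-- `f` is piecewise continuous on `s ⊆ ℝ`: continuous within `s` away from a finite
exceptional set, and bounded on `s`. -/
def PiecewiseContinuousOn {E : Type*} [NormedAddCommGroup E] (f : ℝ → E) (s : Set ℝ) : Prop :=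
  ∃ t : Finset ℝ, (∀ x ∈ s \ (t : Set ℝ), ContinuousWithinAt f s x) ∧ ∃ C, ∀ x ∈ s, ‖f x‖ ≤ C

section PiecewiseContinuous

variable {E : Type*} [NormedAddCommGroup E]

theorem PiecewiseContinuousOn.mono {f : ℝ → E} {s t : Set ℝ} (hf : PiecewiseContinuousOn f s)
    (hts : t ⊆ s) : PiecewiseContinuousOn f t := by
  obtain ⟨e, hc, C, hC⟩ := hf
  exact ⟨e, fun x hx => (hc x ⟨hts hx.1, hx.2⟩).mono hts, C, fun x hx => hC x (hts hx)⟩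

theorem PiecewiseContinuousOn.integrableOn {f : ℝ → E} {s : Set ℝ}
    (hf : PiecewiseContinuousOn f s) (hs : MeasurableSet s) {μ : Measure ℝ} [NullSingletonClass μ]
    (hμs : μ s ≠ ⊤) : IntegrableOn f s μ := by
  obtain ⟨e, hc, C, hC⟩ := hf
  have hmeas : AEStronglyMeasurable f (μ.restrict (s \ e)) :=
    ContinuousOn.aestronglyMeasurable (fun x hx => (hc x hx).mono Set.sdiff_subset)
      (hs.diff e.finite_toSet.measurableSet)
  rw [Measure.restrict_congr_set (sdiff_ae_eq_self.mpr
    (measure_mono_null Set.inter_subset_right (e.finite_toSet.measure_zero μ)))] at hmeas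
  exact Integrable.mono' (integrableOn_const hμs) hmeas
    ((ae_restrict_iff' hs).mpr (ae_of_all _ hC))

theorem PiecewiseContinuousOn.intervalIntegrable_of_Ico {f : ℝ → E} {a b : ℝ} (hab : a ≤ b)
    (hf : PiecewiseContinuousOn f (Set.Ico a b)) : IntervalIntegrable f volume a b :=
  (intervalIntegrable_iff_integrableOn_Ico_of_le hab).mpr
    (hf.integrableOn measurableSet_Ico measure_Ico_lt_top.ne)

variable {F G : Type*} [NormedAddCommGroup F] [NormedAddCommGroup G]
  [NormedSpace ℝ E] [NormedSpace ℝ F] [NormedSpace ℝ G] [FiniteDimensional ℝ E]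
  [FiniteDimensional ℝ F]

theorem PiecewiseContinuousOn.bilin (B : E →ₗ[ℝ] F →ₗ[ℝ] G) {f : ℝ → E} {g : ℝ → F}
    {s : Set ℝ} (hf : PiecewiseContinuousOn f s) (hg : PiecewiseContinuousOn g s) :
    PiecewiseContinuousOn (fun x => B (f x) (g x)) s := by
  obtain ⟨ef, hfc, Cf, hCf⟩ := hf
  obtain ⟨eg, hgc, Cg, hCg⟩ := hg
  let B' : E →L[ℝ] F →L[ℝ] G :=
    LinearMap.toContinuousLinearMap (LinearMap.toContinuousLinearMap.toLinearMap ∘ₗ B)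
  refine ⟨ef ∪ eg, fun x hx => ?_, ‖B'‖ * Cf * Cg, fun x hx => ?_⟩
  · have hx' : x ∉ (ef : Set ℝ) ∧ x ∉ (eg : Set ℝ) := by simpa [not_or] using hx.2
    exact (B'.continuous.continuousAt.comp_continuousWithinAt (hfc x ⟨hx.1, hx'.1⟩)).clm_apply
      (hgc x ⟨hx.1, hx'.2⟩)
  · calc ‖B (f x) (g x)‖ = ‖B' (f x) (g x)‖ := rfl
      _ ≤ ‖B'‖ * ‖f x‖ * ‖g x‖ := B'.le_opNorm₂ _ _
      _ ≤ ‖B'‖ * Cf * Cg := by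
        have := (norm_nonneg _).trans (hCf x hx)
        gcongr
        exacts [hCf x hx, hCg x hx]

end PiecewiseContinuous

theorem LinearMap.intervalIntegral_comp_comm {E F : Type*} [NormedAddCommGroup E]
    [NormedSpace ℝ E] [FiniteDimensional ℝ E] [NormedAddCommGroup F] [NormedSpace ℝ F]
    [CompleteSpace F] (L : E →ₗ[ℝ] F) {f : ℝ → E} {a b : ℝ}
    (hf : IntervalIntegrable f volume a b) :
    ∫ x in a..b, L (f x) = L (∫ x in a..b, f x) :=
  haveI : CompleteSpace E := FiniteDimensional.complete ℝ E
  (LinearMap.toContinuousLinearMap L).intervalIntegral_comp_comm hf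

theorem LinearMap.intervalIntegrable_comp {E F : Type*} [NormedAddCommGroup E]
    [NormedSpace ℝ E] [FiniteDimensional ℝ E] [NormedAddCommGroup F] [NormedSpace ℝ F]
    (L : E →ₗ[ℝ] F) {f : ℝ → E} {a b : ℝ} (hf : IntervalIntegrable f volume a b) :
    IntervalIntegrable (fun x => L (f x)) volume a b :=
  ⟨(LinearMap.toContinuousLinearMap L).integrable_comp hf.1,
    (LinearMap.toContinuousLinearMap L).integrable_comp hf.2⟩

section IntervalIntegralMatrix

variable {m n : Type*} [Fintype m] [Fintype n] {a b : ℝ}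

theorem dotProduct_intervalIntegral (v : n → ℝ) {f : ℝ → n → ℝ}
    (hf : IntervalIntegrable f volume a b) :
    v ⬝ᵥ ∫ x in a..b, f x = ∫ x in a..b, v ⬝ᵥ f x :=
  ((dotProductBilin ℝ ℝ v).intervalIntegral_comp_comm hf).symm

theorem dotProduct_intervalIntegral_mulVec [DecidableEq m] [DecidableEq n] (v : m → ℝ)
    (w : n → ℝ) {F : ℝ → Matrix m n ℝ} (hF : IntervalIntegrable F volume a b) :
    v ⬝ᵥ (∫ x in a..b, F x) *ᵥ w = ∫ x in a..b, v ⬝ᵥ F x *ᵥ w :=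
  ((dotProductBilin ℝ ℝ v ∘ₗ (mulVecBilin ℝ ℝ).flip w).intervalIntegral_comp_comm hF).symm

theorem transpose_intervalIntegral [DecidableEq m] [DecidableEq n] {F : ℝ → Matrix m n ℝ}
    (hF : IntervalIntegrable F volume a b) :
    (∫ x in a..b, F x)ᵀ = ∫ x in a..b, (F x)ᵀ :=
  ((transposeLinearEquiv m n ℝ ℝ).toLinearMap.intervalIntegral_comp_comm hF).symm

theorem posSemidef_intervalIntegral [DecidableEq n] {F : ℝ → Matrix n n ℝ} (hab : a ≤ b)
    (hF : IntervalIntegrable F volume a b) (hpsd : ∀ x, (F x).PosSemidef) :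
    (∫ x in a..b, F x).PosSemidef := by
  refine PosSemidef.of_dotProduct_mulVec_nonneg ?_ fun v => ?_
  · rw [IsHermitian, conjTranspose_eq_transpose_of_trivial, transpose_intervalIntegral hF]
    exact intervalIntegral.integral_congr fun x _ => (hpsd x).isHermitian
  · rw [dotProduct_intervalIntegral_mulVec _ _ hF]
    exact intervalIntegral.integral_nonneg hab fun x _ => (hpsd x).dotProduct_mulVec_nonneg v

end IntervalIntegralMatrix

theorem Matrix.mulVec_inv_mulVec {n R : Type*} [Fintype n] [DecidableEq n] [CommRing R]
    {M : Matrix n n R} (hM : IsUnit M) (v : n → R) : M *ᵥ (M⁻¹ *ᵥ v) = v := by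
  rw [mulVec_mulVec, mul_nonsing_inv _ ((isUnit_iff_isUnit_det M).mp hM), one_mulVec]

section CompletingTheSquare

variable {n : Type*} [Fintype n]

theorem Matrix.PosDef.two_mul_dotProduct_sub_le [DecidableEq n] {V : Matrix n n ℝ}
    (hV : V.PosDef) (z w : n → ℝ) :
    2 * (z ⬝ᵥ w) - z ⬝ᵥ V⁻¹ *ᵥ z ≤ w ⬝ᵥ V *ᵥ w := by
  have hVV := mulVec_inv_mulVec hV.isUnit z
  have hVsymm : ∀ u, u ᵥ* V = V *ᵥ u := fun u => by
    rw [← mulVec_transpose, ← conjTranspose_eq_transpose_of_trivial, hV.isHermitian.eq]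
  have hsq := hV.posSemidef.dotProduct_mulVec_nonneg (w - V⁻¹ *ᵥ z)
  rw [star_trivial, mulVec_sub, hVV, sub_dotProduct, dotProduct_sub, dotProduct_sub,
    dotProduct_mulVec (V⁻¹ *ᵥ z), hVsymm, hVV, dotProduct_comm w z,
    dotProduct_comm (V⁻¹ *ᵥ z) z] at hsq
  linarith

theorem two_mul_dotProduct_sub_le {μ : ℝ} (hμ : 0 < μ) (z w : n → ℝ) :
    2 * (z ⬝ᵥ w) - μ⁻¹ * (z ⬝ᵥ z) ≤ μ * (w ⬝ᵥ w) := by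
  have hsq : μ * (w ⬝ᵥ w) - (2 * (z ⬝ᵥ w) - μ⁻¹ * (z ⬝ᵥ z))
      = μ⁻¹ * ((μ • w - z) ⬝ᵥ (μ • w - z)) := by
    simp only [sub_dotProduct, dotProduct_sub, smul_dotProduct, dotProduct_smul, smul_eq_mul,
      dotProduct_comm w z]
    field_simp
    ring
  have := mul_nonneg (inv_nonneg.mpr hμ.le) (dotProduct_star_self_nonneg (μ • w - z))
  rw [star_trivial] at this
  linarith

end CompletingTheSquare

theorem neg_two_mul_dotProduct_intervalIntegral_sub_le {m n : Type*} [Fintype m] [Fintype n]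
    [DecidableEq m] [DecidableEq n] {a b μ : ℝ} (hab : a ≤ b) (hμ : 0 < μ)
    {Q : ℝ → Matrix m n ℝ} {φ : ℝ → n → ℝ}
    (hQφ : IntervalIntegrable (fun θ => Q θ *ᵥ φ θ) volume a b)
    (hQQ : IntervalIntegrable (fun θ => Q θ * (Q θ)ᵀ) volume a b)
    (hφφ : IntervalIntegrable (fun θ => φ θ ⬝ᵥ φ θ) volume a b) (z : m → ℝ) :
    -(2 * (z ⬝ᵥ ∫ θ in a..b, Q θ *ᵥ φ θ)) - μ⁻¹ * (z ⬝ᵥ (∫ θ in a..b, Q θ * (Q θ)ᵀ) *ᵥ z)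
      ≤ μ * ∫ θ in a..b, φ θ ⬝ᵥ φ θ := by
  have hpointwise : ∀ θ, -(2 * (z ⬝ᵥ Q θ *ᵥ φ θ)) - μ⁻¹ * (z ⬝ᵥ (Q θ * (Q θ)ᵀ) *ᵥ z)
      ≤ μ * (φ θ ⬝ᵥ φ θ) := fun θ => by
    have hsq := two_mul_dotProduct_sub_le hμ (-(z ᵥ* Q θ)) (φ θ)
    rw [neg_dotProduct, neg_dotProduct, dotProduct_neg, neg_neg] at hsq
    rw [dotProduct_mulVec, ← mulVec_mulVec, dotProduct_mulVec, mulVec_transpose]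
    linarith
  have hzQφ : IntervalIntegrable (fun θ => -(2 * (z ⬝ᵥ Q θ *ᵥ φ θ))) volume a b :=
    (((dotProductBilin ℝ ℝ z).intervalIntegrable_comp hQφ).const_mul 2).neg
  have hzQQz : IntervalIntegrable (fun θ => z ⬝ᵥ (Q θ * (Q θ)ᵀ) *ᵥ z) volume a b :=
    (dotProductBilin ℝ ℝ z ∘ₗ (mulVecBilin ℝ ℝ).flip z).intervalIntegrable_comp hQQ
  calc -(2 * (z ⬝ᵥ ∫ θ in a..b, Q θ *ᵥ φ θ)) - μ⁻¹ * (z ⬝ᵥ (∫ θ in a..b, Q θ * (Q θ)ᵀ) *ᵥ z)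
      = ∫ θ in a..b, -(2 * (z ⬝ᵥ Q θ *ᵥ φ θ)) - μ⁻¹ * (z ⬝ᵥ (Q θ * (Q θ)ᵀ) *ᵥ z) := by
        rw [intervalIntegral.integral_sub hzQφ (hzQQz.const_mul μ⁻¹),
          intervalIntegral.integral_neg, intervalIntegral.integral_const_mul,
          intervalIntegral.integral_const_mul, dotProduct_intervalIntegral z hQφ,
          dotProduct_intervalIntegral_mulVec z z hQQ]
    _ ≤ ∫ θ in a..b, μ * (φ θ ⬝ᵥ φ θ) :=
        intervalIntegral.integral_mono_on hab (hzQφ.sub (hzQQz.const_mul μ⁻¹))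
          (hφφ.const_mul μ) fun θ _ => hpointwise θ
    _ = μ * ∫ θ in a..b, φ θ ⬝ᵥ φ θ := intervalIntegral.integral_const_mul _ _

/-- Core estimate of Lemma 2:
`(x + ∫Qφ)ᵀ V (x + ∫Qφ) + μ ∫‖φ‖² ≥ xᵀ (V⁻¹ + μ⁻¹G)⁻¹ x` with `G = ∫ Q Qᵀ`. -/
theorem lyapunov_lower_bound_core_estimate
    {n r : ℕ} (h : ℝ) (hh : 0 < h)
    (V : Matrix (Fin n) (Fin n) ℝ) (hV : V.PosDef)
    (μ : ℝ) (hμ : 0 < μ)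
    (Q : ℝ → Matrix (Fin n) (Fin r) ℝ)
    (hQ : PiecewiseContinuousOn Q (Set.Icc (-h) 0))
    (G : Matrix (Fin n) (Fin n) ℝ) (hG : G = ∫ θ in (-h)..0, Q θ * (Q θ)ᵀ) :
    ∀ (x : Fin n → ℝ) (φ : ℝ → Fin r → ℝ),
      PiecewiseContinuousOn φ (Set.Ico (-h) 0) →
      (x + ∫ θ in (-h)..0, (Q θ).mulVec (φ θ)) ⬝ᵥ
          V.mulVec (x + ∫ θ in (-h)..0, (Q θ).mulVec (φ θ))
        + μ * ∫ θ in (-h)..0, φ θ ⬝ᵥ φ θ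
      ≥ x ⬝ᵥ ((V⁻¹ + μ⁻¹ • G)⁻¹).mulVec x := by
  intro x φ hφ
  have hle : -h ≤ 0 := by linarith
  have hQ' := hQ.mono Set.Ico_subset_Icc_self
  have hQφ : IntervalIntegrable (fun θ => Q θ *ᵥ φ θ) volume (-h) 0 :=
    (hQ'.bilin (mulVecBilin ℝ ℝ) hφ).intervalIntegrable_of_Ico hle
  have hφφ : IntervalIntegrable (fun θ => φ θ ⬝ᵥ φ θ) volume (-h) 0 :=
    (hφ.bilin (dotProductBilin ℝ ℝ) hφ).intervalIntegrable_of_Ico hle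
  have hQQ : IntervalIntegrable (fun θ => Q θ * (Q θ)ᵀ) volume (-h) 0 :=
    (hQ'.bilin ((mulLinearMap ℝ).compl₂ (transposeLinearEquiv _ _ ℝ ℝ).toLinearMap)
      hQ').intervalIntegrable_of_Ico hle
  have hG_psd : G.PosSemidef := hG ▸ posSemidef_intervalIntegral hle hQQ fun θ => by
    simpa using posSemidef_self_mul_conjTranspose (Q θ)
  have hA : (V⁻¹ + μ⁻¹ • G).PosDef := hV.inv.add_posSemidef (hG_psd.smul (by positivity))
  set z := (V⁻¹ + μ⁻¹ • G)⁻¹ *ᵥ x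
  have hzx : z ⬝ᵥ x = z ⬝ᵥ V⁻¹ *ᵥ z + μ⁻¹ * (z ⬝ᵥ G *ᵥ z) := by
    conv_lhs => rw [← mulVec_inv_mulVec hA.isUnit x]
    rw [add_mulVec, dotProduct_add, smul_mulVec, dotProduct_smul, smul_eq_mul]
  have hV_sq := hV.two_mul_dotProduct_sub_le z (x + ∫ θ in (-h)..0, Q θ *ᵥ φ θ)
  have hφ_sq := neg_two_mul_dotProduct_intervalIntegral_sub_le hle hμ hQφ hQQ hφφ z
  rw [← hG] at hφ_sq
  rw [dotProduct_add] at hV_sq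
  rw [ge_iff_le, dotProduct_comm]
  linarith
end

section
/- L² estimate of the kernel mismatch for a single discrete input delay (inequality (63) in the proof of Corollary 1): let A ∈ ℝ^{n×n} with A ≠ 0, B ∈ ℝ^{n×r}, δ ≥ 0, δ̂ ≥ 0, and h = max{δ, δ̂}. Define Q(θ) = e^{-A(δ+θ)}B for θ ∈ [-δ, 0] and Q(θ) = 0 for θ ∈ [-h, -δ), and Q̂(θ) = e^{-A(δ̂+θ)}B for θ ∈ [-δ̂, 0] and Q̂(θ) = 0 for θ ∈ [-h, -δ̂). Then ∫_{-h}^0 ‖Q̂(θ) - Q(θ)‖² dθ ≤ (‖B‖²/(2‖A‖)) ( e^{2‖A‖|δ̂-δ|} - 1 ) + (‖B‖²/(2‖A‖)) ( e^{2‖A‖h} - 1 ) ( e^{‖A‖|δ̂-δ|} - 1 )². -/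
open scoped Matrix.Norms.L2Operator
open Matrix MeasureTheory

/-!
By symmetry we may assume `δ ≤ δ̂`. Everything rests on the series estimate
`‖e^{tX} - e^{sX}‖ ≤ e^{t‖X‖} - e^{s‖X‖}` for `0 ≤ s ≤ t`. On `[-δ̂, -δ)` only `Q̂` is nonzero and
`‖Q̂(θ)‖ ≤ e^{‖A‖(δ̂+θ)}‖B‖`; on `[-δ, 0]` the estimate gives
`‖Q̂(θ) - Q(θ)‖ ≤ (e^{‖A‖(δ̂-δ)} - 1) e^{‖A‖(δ+θ)} ‖B‖`. Squaring and integrating the two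
exponentials yields the two terms of the bound.
-/

open Nat in
theorem NormedSpace.norm_exp_smul_sub_exp_smul_le {𝔸 : Type*} [NormedRing 𝔸] [NormedAlgebra ℝ 𝔸]
    [CompleteSpace 𝔸] (x : 𝔸) {s t : ℝ} (hs : 0 ≤ s) (hst : s ≤ t) :
    ‖exp (t • x) - exp (s • x)‖ ≤ Real.exp (‖x‖ * t) - Real.exp (‖x‖ * s) := by
  have series (u : ℝ) : HasSum (fun k => ((k ! : ℝ)⁻¹ * u ^ k) • x ^ k) (exp (u • x)) := by
    simpa only [smul_pow, smul_smul] using exp_series_hasSum_exp' (𝕂 := ℝ) (u • x)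
  have real_series (u : ℝ) :
      HasSum (fun k => (k ! : ℝ)⁻¹ * (‖x‖ ^ k * u ^ k)) (Real.exp (‖x‖ * u)) := by
    simpa only [Real.exp_eq_exp_ℝ, smul_eq_mul, mul_pow]
      using exp_series_hasSum_exp' (𝕂 := ℝ) (‖x‖ * u)
  -- the `k = 0` terms cancel, so no bound on `‖1‖` is needed
  refine ((series t).sub (series s)).norm_le_of_bounded ((real_series t).sub (real_series s))
    fun k => ?_
  have hpow : 0 ≤ t ^ k - s ^ k := sub_nonneg.mpr (pow_le_pow_left₀ hs hst k)
  have hnorm : (t ^ k - s ^ k) * ‖x ^ k‖ ≤ (t ^ k - s ^ k) * ‖x‖ ^ k := by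
    rcases k with _ | k
    · simp
    · exact mul_le_mul_of_nonneg_left (norm_pow_le' x k.succ_pos) hpow
  rw [← sub_smul, ← mul_sub, norm_smul, Real.norm_of_nonneg (by positivity), mul_assoc]
  calc _ ≤ (k ! : ℝ)⁻¹ * ((t ^ k - s ^ k) * ‖x‖ ^ k) := by gcongr
    _ = _ := by ring

theorem integral_exp_mul_add {b : ℝ} (hb : b ≠ 0) (H c d : ℝ) :
    ∫ θ in c..d, Real.exp (b * (H + θ))
      = (Real.exp (b * (H + d)) - Real.exp (b * (H + c))) / b := by
  have := intervalIntegral.integral_comp_mul_add (a := c) (b := d) Real.exp hb (b * H)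
  simp only [integral_exp, smul_eq_mul] at this
  simp only [mul_add, add_comm (b * H)]
  rw [div_eq_inv_mul, this]

section DelayKernel

variable {m l : Type*} [Fintype m] [DecidableEq m] [Fintype l] [DecidableEq l]
  (A : Matrix m m ℝ) (B : Matrix m l ℝ)

theorem norm_exp_neg_smul_mul_sub_le {s t : ℝ} (hs : 0 ≤ s) (hst : s ≤ t) :
    ‖NormedSpace.exp ((-t) • A) * B - NormedSpace.exp ((-s) • A) * B‖
      ≤ (Real.exp (‖A‖ * t) - Real.exp (‖A‖ * s)) * ‖B‖ := by
  rw [← Matrix.sub_mul]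
  refine (l2_opNorm_mul _ _).trans ?_
  gcongr
  simpa only [neg_smul, ← smul_neg, norm_neg]
    using NormedSpace.norm_exp_smul_sub_exp_smul_le (-A) hs hst

theorem norm_exp_neg_smul_mul_le {t : ℝ} (ht : 0 ≤ t) :
    ‖NormedSpace.exp ((-t) • A) * B‖ ≤ Real.exp (‖A‖ * t) * ‖B‖ := by
  have h := norm_exp_neg_smul_mul_sub_le A B le_rfl ht
  rw [neg_zero, zero_smul, NormedSpace.exp_zero, Matrix.one_mul, mul_zero, Real.exp_zero] at h
  calc _ ≤ ‖NormedSpace.exp ((-t) • A) * B - B‖ + ‖B‖ := norm_le_norm_sub_add _ _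
    _ ≤ (Real.exp (‖A‖ * t) - 1) * ‖B‖ + ‖B‖ := by gcongr
    _ = Real.exp (‖A‖ * t) * ‖B‖ := by ring

/-- The kernel `Q` (for `δ̂`: `Q̂`) of the statement, extended by zero to all of `ℝ`. -/
noncomputable def delayKernel (δ θ : ℝ) : Matrix m l ℝ :=
  if -δ ≤ θ then NormedSpace.exp ((-(δ + θ)) • A) * B else 0

theorem stronglyMeasurable_delayKernel (δ : ℝ) : StronglyMeasurable (delayKernel A B δ) := by
  refine .ite measurableSet_Ici (Continuous.stronglyMeasurable ?_) stronglyMeasurable_const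
  have hexp := (differentiable_exp_smul_const ℝ A).continuous
  exact (hexp.comp (continuous_const.add continuous_id).neg).matrix_mul continuous_const

theorem norm_delayKernel_sub_le {δ δ' : ℝ} (hδδ' : δ ≤ δ') (θ : ℝ) :
    ‖delayKernel A B δ' θ - delayKernel A B δ θ‖ ≤ Real.exp (‖A‖ * (δ' + θ)) * ‖B‖ := by
  unfold delayKernel
  split_ifs with h' h
  · refine (norm_exp_neg_smul_mul_sub_le A B (by linarith) (by linarith)).trans ?_
    gcongr
    exact sub_le_self _ (Real.exp_pos _).le
  · rw [sub_zero]
    exact norm_exp_neg_smul_mul_le A B (by linarith)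
  · linarith
  · rw [sub_zero, norm_zero]
    positivity

theorem norm_delayKernel_sub_le_of_le {δ δ' θ : ℝ} (hδδ' : δ ≤ δ') (hθ : -δ ≤ θ) :
    ‖delayKernel A B δ' θ - delayKernel A B δ θ‖
      ≤ (Real.exp (‖A‖ * (δ' - δ)) - 1) * Real.exp (‖A‖ * (δ + θ)) * ‖B‖ := by
  unfold delayKernel
  rw [if_pos (by linarith), if_pos hθ]
  refine (norm_exp_neg_smul_mul_sub_le A B (by linarith) (by linarith)).trans_eq ?_
  rw [sub_one_mul, ← Real.exp_add]
  ring_nf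

theorem integral_norm_delayKernel_sub_sq_le (hA : A ≠ 0) {δ δ' : ℝ} (hδ : 0 ≤ δ) (hδδ' : δ ≤ δ') :
    ∫ θ in (-δ')..0, ‖delayKernel A B δ' θ - delayKernel A B δ θ‖ ^ 2
      ≤ ‖B‖ ^ 2 / (2 * ‖A‖) * (Real.exp (2 * ‖A‖ * (δ' - δ)) - 1)
        + ‖B‖ ^ 2 / (2 * ‖A‖) * (Real.exp (2 * ‖A‖ * δ') - 1) *
            (Real.exp (‖A‖ * (δ' - δ)) - 1) ^ 2 := by
  set a := ‖A‖
  have ha : 0 < a := norm_pos_iff.mpr hA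
  set E := Real.exp (a * (δ' - δ)) - 1
  set g := fun θ => ‖delayKernel A B δ' θ - delayKernel A B δ θ‖ ^ 2
  have sq_exp (c x : ℝ) : (Real.exp (a * x) * c) ^ 2 = c ^ 2 * Real.exp (2 * a * x) := by
    rw [mul_pow, ← Real.exp_nat_mul]
    ring_nf
  have hg_le (θ : ℝ) : g θ ≤ ‖B‖ ^ 2 * Real.exp (2 * a * (δ' + θ)) := by
    rw [← sq_exp]
    exact pow_le_pow_left₀ (norm_nonneg _) (norm_delayKernel_sub_le A B hδδ' θ) 2
  have hg_le_of_le {θ : ℝ} (hθ : -δ ≤ θ) : g θ ≤ (‖B‖ * E) ^ 2 * Real.exp (2 * a * (δ + θ)) :=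
    calc g θ ≤ (Real.exp (a * (δ + θ)) * (‖B‖ * E)) ^ 2 :=
          pow_le_pow_left₀ (norm_nonneg _)
            ((norm_delayKernel_sub_le_of_le A B hδδ' hθ).trans_eq (by ring)) 2
      _ = _ := sq_exp _ _
  have hg_int (c d : ℝ) : IntervalIntegrable g volume c d := by
    refine IntervalIntegrable.mono_fun' (g := fun θ => ‖B‖ ^ 2 * Real.exp (2 * a * (δ' + θ)))
      (Continuous.intervalIntegrable (by fun_prop) _ _) ?_ (.of_forall fun θ => ?_)
    · exact (((stronglyMeasurable_delayKernel A B δ').sub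
        (stronglyMeasurable_delayKernel A B δ)).norm.pow 2).aestronglyMeasurable
    · exact (Real.norm_of_nonneg (sq_nonneg _)).trans_le (hg_le θ)
  have head : ∫ θ in (-δ')..(-δ), g θ ≤ ‖B‖ ^ 2 / (2 * a) * (Real.exp (2 * a * (δ' - δ)) - 1) :=
    calc ∫ θ in (-δ')..(-δ), g θ ≤ ∫ θ in (-δ')..(-δ), ‖B‖ ^ 2 * Real.exp (2 * a * (δ' + θ)) :=
          intervalIntegral.integral_mono_on (by linarith) (hg_int _ _)
            (Continuous.intervalIntegrable (by fun_prop) _ _)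
            fun θ _ => hg_le θ
      _ = _ := by
          rw [intervalIntegral.integral_const_mul, integral_exp_mul_add (by positivity),
            add_neg_cancel, mul_zero, Real.exp_zero]
          ring_nf
  have tail : ∫ θ in (-δ)..0, g θ ≤ ‖B‖ ^ 2 / (2 * a) * (Real.exp (2 * a * δ') - 1) * E ^ 2 :=
    calc ∫ θ in (-δ)..0, g θ ≤ ∫ θ in (-δ)..0, (‖B‖ * E) ^ 2 * Real.exp (2 * a * (δ + θ)) :=
          intervalIntegral.integral_mono_on (by linarith) (hg_int _ _)
            (Continuous.intervalIntegrable (by fun_prop) _ _)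
            fun θ hθ => hg_le_of_le hθ.1
      _ = ‖B‖ ^ 2 / (2 * a) * (Real.exp (2 * a * δ) - 1) * E ^ 2 := by
          rw [intervalIntegral.integral_const_mul, integral_exp_mul_add (by positivity),
            add_zero, add_neg_cancel, mul_zero, Real.exp_zero]
          ring
      _ ≤ _ := by gcongr
  rw [← intervalIntegral.integral_add_adjacent_intervals (hg_int _ (-δ)) (hg_int _ _)]
  exact add_le_add head tail

end DelayKernel

/-- L² estimate of the kernel mismatch for a single discrete input delay
(inequality (63) in the proof of Corollary 1). -/
theorem kernel_mismatch_L2_estimate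
    {n r : ℕ}
    (A : Matrix (Fin n) (Fin n) ℝ) (hA : A ≠ 0)
    (B : Matrix (Fin n) (Fin r) ℝ)
    (δ δh : ℝ) (hδ : 0 ≤ δ) (hδh : 0 ≤ δh)
    (h : ℝ) (hh : h = max δ δh)
    (Q Qh : ℝ → Matrix (Fin n) (Fin r) ℝ)
    (hQ : ∀ θ ∈ Set.Icc (-h) 0,
      Q θ = if -δ ≤ θ then NormedSpace.exp ((-(δ + θ)) • A) * B else 0)
    (hQh : ∀ θ ∈ Set.Icc (-h) 0,
      Qh θ = if -δh ≤ θ then NormedSpace.exp ((-(δh + θ)) • A) * B else 0) :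
    (∫ θ in (-h)..0, ‖Qh θ - Q θ‖ ^ 2)
      ≤ ‖B‖ ^ 2 / (2 * ‖A‖) * (Real.exp (2 * ‖A‖ * |δh - δ|) - 1)
        + ‖B‖ ^ 2 / (2 * ‖A‖) * (Real.exp (2 * ‖A‖ * h) - 1) *
            (Real.exp (‖A‖ * |δh - δ|) - 1) ^ 2 := by
  have hQ_eq : ∫ θ in (-h)..0, ‖Qh θ - Q θ‖ ^ 2
      = ∫ θ in (-h)..0, ‖delayKernel A B δh θ - delayKernel A B δ θ‖ ^ 2 := by
    refine intervalIntegral.integral_congr fun θ hθ => ?_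
    rw [Set.uIcc_of_le (by simp [hh, hδ])] at hθ
    rw [hQ θ hθ, hQh θ hθ, delayKernel, delayKernel]
  rw [hQ_eq, hh]
  rcases le_total δ δh with hle | hle
  · rw [max_eq_right hle, abs_of_nonneg (sub_nonneg.mpr hle)]
    exact integral_norm_delayKernel_sub_sq_le A B hA hδ hle
  · rw [max_eq_left hle, abs_sub_comm, abs_of_nonneg (sub_nonneg.mpr hle)]
    simpa only [norm_sub_rev] using integral_norm_delayKernel_sub_sq_le A B hA hδh hle
end
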